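/- arXiv:1705.04867 — 3 statements merged into one kernel-verified Lean document; each statement's English description precedes it below -/
import Mathlib

section
/- Let J_1, ..., J_k be a uniformly random sequence of k distinct elements drawn without replacement from a finite set of size n (k <= n). For indices 1 <= s < s' <= k, the total variation distance between the conditional law of (J_{s'}, ..., J_k) given (J_1,...,J_s) = (tau, w) and given (J_1,...,J_s) = (tau, w-hat) equals (k - s' + 1)/(n - s), for any valid prefixes differing only in the s-th coordinate. -/
open Classical

lemma count_inj_avoid {α : Type*} [Fintype α] (r : ℕ) (S : Finset α) :
    (Finset.univ.filter (fun y : Fin r → α =>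
        Function.Injective y ∧ ∀ i, y i ∉ S)).card
      = (Fintype.card α - S.card).descFactorial r := by
  classical
  have e : {y : Fin r → α // Function.Injective y ∧ ∀ i, y i ∉ S} ≃
      (Fin r ↪ {a : α // a ∉ S}) :=
    { toFun := fun y => ⟨fun i => ⟨y.1 i, y.2.2 i⟩,
        fun i j h => y.2.1 (congrArg Subtype.val h)⟩
      invFun := fun e => ⟨fun i => (e i).1,
        ⟨fun i j h => e.injective (Subtype.ext h), fun i => (e i).2⟩⟩
      left_inv := fun y => rfl
      right_inv := fun e => rfl }
  have h1 : Fintype.card {y : Fin r → α // Function.Injective y ∧ ∀ i, y i ∉ S}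
      = (Fintype.card α - S.card).descFactorial r := by
    rw [Fintype.card_congr e, Fintype.card_embedding_eq, Fintype.card_fin]
    congr 1
    rw [Fintype.card_subtype_compl, Fintype.card_coe]
  rw [← h1, Fintype.card_subtype]

lemma min_ite {c : ℝ} (hc : 0 ≤ c) (P Q : Prop) [Decidable P] [Decidable Q] :
    min (if P then c else 0) (if Q then c else 0) = if P ∧ Q then c else 0 := by
  by_cases hP : P <;> by_cases hQ : Q <;>
    simp [hP, hQ, min_eq_left hc, min_eq_right hc]

lemma descFactorial_split (a r : ℕ) (hr : 1 ≤ r) :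
    a.descFactorial r = (a - (r - 1)) * a.descFactorial (r - 1) := by
  cases r with
  | zero => omega
  | succ r' => simp [Nat.descFactorial_succ]

lemma descFactorial_top (m r : ℕ) (hm : 1 ≤ m) (hr : 1 ≤ r) :
    m.descFactorial r = m * (m - 1).descFactorial (r - 1) := by
  cases m with
  | zero => omega
  | succ m' =>
    cases r with
    | zero => omega
    | succ r' => simpa using Nat.succ_descFactorial_succ m' r'

lemma abs_sub_eq_add_sub_two_min (a b : ℝ) : |a - b| = a + b - 2 * min a b := by
  rcases le_total a b with h | h
  · rw [abs_sub_comm, abs_of_nonneg (sub_nonneg.2 h), min_eq_left h]; ring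
  · rw [abs_of_nonneg (sub_nonneg.2 h), min_eq_right h]; ring

/-- Total variation distance between the conditional laws of the suffix `(J_{s'},…,J_k)` of a
uniformly random injective sequence of length `k` from an `n`-element set, conditioned on two
prefixes of length `s` that differ only in their last coordinate (`w` versus `wHat`): each
conditional law is uniform over injective sequences of length `r = k - s' + 1` avoiding the
prefix, and their total variation distance equals `(k - s' + 1)/(n - s)`. -/
theorem tv_distance_sampling_without_replacement
    {α : Type*} [Fintype α] (n k s s' : ℕ) (hcard : Fintype.card α = n)
    (hs : 1 ≤ s) (hss' : s < s') (hs'k : s' ≤ k) (hkn : k ≤ n)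
    (T : Finset α) (hT : T.card = s - 1)
    (w wHat : α) (hw : w ∉ T) (hwHat : wHat ∉ T) (hwwHat : w ≠ wHat) :
    (1 / 2 : ℝ) * ∑ x : Fin (k - s' + 1) → α,
        |(if Function.Injective x ∧ ∀ i, x i ∉ insert w T then
            (1 : ℝ) / ((Finset.univ.filter (fun y : Fin (k - s' + 1) → α =>
              Function.Injective y ∧ ∀ i, y i ∉ insert w T)).card)
          else 0)
        - (if Function.Injective x ∧ ∀ i, x i ∉ insert wHat T then
            (1 : ℝ) / ((Finset.univ.filter (fun y : Fin (k - s' + 1) → α =>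
              Function.Injective y ∧ ∀ i, y i ∉ insert wHat T)).card)
          else 0)|
      = ((k : ℝ) - s' + 1) / ((n : ℝ) - s) := by
  classical
  set r : ℕ := k - s' + 1 with hr
  set m : ℕ := n - s with hm
  have hrm : r ≤ m := by omega
  have hm1 : 1 ≤ m := by omega
  -- cardinalities of the avoided sets
  have hcw : (insert w T).card = s := by
    rw [Finset.card_insert_of_notMem hw, hT]; omega
  have hcwHat : (insert wHat T).card = s := by
    rw [Finset.card_insert_of_notMem hwHat, hT]; omega
  have hcboth : (insert w (insert wHat T)).card = s + 1 := by
    rw [Finset.card_insert_of_notMem (by simp [hwwHat, hw]),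
      Finset.card_insert_of_notMem hwHat, hT]; omega
  set P : (Fin r → α) → Prop :=
    fun y => Function.Injective y ∧ ∀ i, y i ∉ insert w T with hP
  set Q : (Fin r → α) → Prop :=
    fun y => Function.Injective y ∧ ∀ i, y i ∉ insert wHat T with hQ
  have hNP : (Finset.univ.filter P).card = m.descFactorial r := by
    have h := count_inj_avoid r (insert w T)
    rw [hcard, hcw] at h
    exact h
  have hNQ : (Finset.univ.filter Q).card = m.descFactorial r := by
    have h := count_inj_avoid r (insert wHat T)
    rw [hcard, hcwHat] at h
    exact h
  have hNI : (Finset.univ.filter (fun y => P y ∧ Q y)).card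
      = (m - 1).descFactorial r := by
    have hfe : (Finset.univ.filter (fun y : Fin r → α => P y ∧ Q y))
        = Finset.univ.filter (fun y : Fin r → α =>
            Function.Injective y ∧ ∀ i, y i ∉ insert w (insert wHat T)) := by
      apply Finset.filter_congr
      intro y _
      simp only [hP, hQ, Finset.mem_insert]
      constructor
      · rintro ⟨⟨hi, h1⟩, ⟨_, h2⟩⟩
        exact ⟨hi, fun i hmem => by
          rcases hmem with h | h | h
          · exact h1 i (Or.inl h)
          · exact h2 i (Or.inl h)
          · exact h1 i (Or.inr h)⟩
      · rintro ⟨hi, h1⟩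
        exact ⟨⟨hi, fun i hmem => h1 i (by tauto)⟩,
          ⟨hi, fun i hmem => h1 i (by tauto)⟩⟩
    have heq : n - (s + 1) = m - 1 := by omega
    rw [hfe, count_inj_avoid, hcard, hcboth, heq]
  set N : ℕ := m.descFactorial r with hN
  set I : ℕ := (m - 1).descFactorial r with hI
  set D : ℕ := (m - 1).descFactorial (r - 1) with hD
  have hDpos : 0 < D := by
    rw [hD, Nat.pos_iff_ne_zero, Ne, Nat.descFactorial_eq_zero_iff_lt]
    omega
  have hNeq : N = m * D := descFactorial_top m r hm1 (by omega)
  have hIeq : I = (m - r) * D := by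
    have h := descFactorial_split (m - 1) r (by omega)
    have h2 : (m - 1) - (r - 1) = m - r := by omega
    rw [h2] at h
    exact h
  have hNpos : 0 < N := by rw [hNeq]; positivity
  have hNne : (N : ℝ) ≠ 0 := Nat.cast_ne_zero.2 hNpos.ne'
  -- rewrite the summand
  have hsum : ∀ x : Fin r → α,
      |(if P x then (1 : ℝ) / ((Finset.univ.filter P).card) else 0)
        - (if Q x then (1 : ℝ) / ((Finset.univ.filter Q).card) else 0)|
      = (if P x then (1 : ℝ) / N else 0) + (if Q x then (1 : ℝ) / N else 0)
        - 2 * (if P x ∧ Q x then (1 : ℝ) / N else 0) := by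
    intro x
    rw [hNP, hNQ, abs_sub_eq_add_sub_two_min, min_ite (by positivity)]
  calc (1 / 2 : ℝ) * ∑ x : Fin r → α,
        |(if P x then (1 : ℝ) / ((Finset.univ.filter P).card) else 0)
          - (if Q x then (1 : ℝ) / ((Finset.univ.filter Q).card) else 0)|
      = (1 / 2 : ℝ) * ∑ x : Fin r → α,
        ((if P x then (1 : ℝ) / N else 0) + (if Q x then (1 : ℝ) / N else 0)
          - 2 * (if P x ∧ Q x then (1 : ℝ) / N else 0)) := by
        congr 1; exact Finset.sum_congr rfl fun x _ => hsum x
    _ = (1 / 2 : ℝ) * ((∑ x : Fin r → α, if P x then (1 : ℝ) / N else 0)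
          + (∑ x : Fin r → α, if Q x then (1 : ℝ) / N else 0)
          - 2 * ∑ x : Fin r → α, if P x ∧ Q x then (1 : ℝ) / N else 0) := by
        rw [Finset.sum_sub_distrib, Finset.sum_add_distrib, Finset.mul_sum]
    _ = (1 / 2 : ℝ) * ((N : ℝ) * (1 / N) + (N : ℝ) * (1 / N)
          - 2 * ((I : ℝ) * (1 / N))) := by
        rw [← Finset.sum_filter, ← Finset.sum_filter, ← Finset.sum_filter,
          Finset.sum_const, Finset.sum_const, Finset.sum_const, hNP, hNQ, hNI]
        simp [nsmul_eq_mul]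
    _ = ((k : ℝ) - s' + 1) / ((n : ℝ) - s) := by
        have hks : ((k : ℝ) - s' + 1) = (r : ℕ) := by
          rw [hr]; push_cast [Nat.cast_sub hs'k]; ring
        have hns : ((n : ℝ) - s) = (m : ℕ) := by
          rw [hm]; push_cast [Nat.cast_sub (le_trans (le_of_lt hss') (le_trans hs'k hkn))]; ring
        rw [hks, hns]
        have hNr : (N : ℝ) = (m : ℝ) * D := by rw [hNeq]; push_cast; ring
        have hIr : (I : ℝ) = ((m : ℝ) - r) * D := by
          rw [hIeq]; push_cast [Nat.cast_sub hrm]; ring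
        have hDne : (D : ℝ) ≠ 0 := Nat.cast_ne_zero.2 hDpos.ne'
        have hmne : (m : ℝ) ≠ 0 := Nat.cast_ne_zero.2 (by omega)
        rw [hIr, hNr]
        field_simp
        ring
end

section
/- For sampling k elements without replacement from n elements (with n >= 2), the mixing coefficient Delta_k := max over s in [k] of (1 + sum over s' from s+1 to k of (k - s' + 1)/(n - s)) equals 1 + k(k-1)/(2(n-1)). -/
lemma sum_aux (s d : ℕ) :
    ∑ s' ∈ Finset.Icc (s + 1) (s + d), (((s + d : ℕ) : ℝ) - s' + 1)
      = (d : ℝ) * ((d : ℝ) + 1) / 2 := by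
  induction d with
  | zero => simp
  | succ d ih =>
      have h : s + 1 ≤ s + d + 1 := by omega
      rw [show s + (d + 1) = (s + d) + 1 by ring, Finset.sum_Icc_succ_top h]
      have : ∑ s' ∈ Finset.Icc (s + 1) (s + d), (((s + d + 1 : ℕ) : ℝ) - s' + 1)
          = ∑ s' ∈ Finset.Icc (s + 1) (s + d), ((((s + d : ℕ) : ℝ) - s' + 1) + 1) := by
        apply Finset.sum_congr rfl
        intro x hx
        push_cast
        ring
      rw [this, Finset.sum_add_distrib, ih, Finset.sum_const, Nat.card_Icc]
      have hcard : s + d + 1 - (s + 1) = d := by omega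
      rw [hcard]
      push_cast
      ring

lemma sum_closed (n s k : ℕ) (hsk : s ≤ k) :
    ∑ s' ∈ Finset.Icc (s + 1) k, ((k : ℝ) - s' + 1) / ((n : ℝ) - s)
      = ((k : ℝ) - s) * ((k : ℝ) - s + 1) / (2 * ((n : ℝ) - s)) := by
  rw [← Finset.sum_div]
  obtain ⟨d, rfl⟩ := Nat.exists_eq_add_of_le hsk
  rw [sum_aux s d]
  push_cast
  rw [div_div]
  ring_nf

/-- Mixing coefficient for sampling `k` elements without replacement from `n` elements
(`n ≥ 2`): `max_{s ∈ [k]} (1 + ∑_{s'=s+1}^{k} (k - s' + 1)/(n - s)) = 1 + k(k-1)/(2(n-1))`. -/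
theorem mixing_coefficient_eq
    (n k : ℕ) (hn : 2 ≤ n) (hk : 1 ≤ k) (hkn : k ≤ n) :
    (Finset.Icc 1 k).sup' (Finset.nonempty_Icc.mpr hk)
        (fun s => 1 + ∑ s' ∈ Finset.Icc (s + 1) k, ((k : ℝ) - s' + 1) / ((n : ℝ) - s))
      = 1 + (k : ℝ) * ((k : ℝ) - 1) / (2 * ((n : ℝ) - 1)) := by
  have hn1 : (0 : ℝ) < (n : ℝ) - 1 := by
    have : (2 : ℝ) ≤ n := by exact_mod_cast hn
    linarith
  have hk1 : (1 : ℝ) ≤ k := by exact_mod_cast hk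
  apply le_antisymm
  · apply Finset.sup'_le
    intro s hs
    simp only [Finset.mem_Icc] at hs
    obtain ⟨hs1, hsk⟩ := hs
    rw [sum_closed n s k hsk]
    have hs1' : (1 : ℝ) ≤ s := by exact_mod_cast hs1
    have hsk' : (s : ℝ) ≤ k := by exact_mod_cast hsk
    have hkn' : (k : ℝ) ≤ n := by exact_mod_cast hkn
    have key : ((k : ℝ) - s) * ((k : ℝ) - s + 1) / (2 * ((n : ℝ) - s))
        ≤ (k : ℝ) * ((k : ℝ) - 1) / (2 * ((n : ℝ) - 1)) := by
      rcases lt_or_ge (s : ℝ) (n : ℝ) with hsn | hsn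
      · rw [div_le_div_iff₀ (by linarith) (by linarith)]
        nlinarith [mul_nonneg (sub_nonneg.mpr hs1') (sub_nonneg.mpr hkn'),
          mul_nonneg (sub_nonneg.mpr hsk') (sub_nonneg.mpr hs1'),
          mul_nonneg (mul_nonneg (sub_nonneg.mpr hsk') (sub_nonneg.mpr hs1'))
            (sub_nonneg.mpr hkn'), sub_nonneg.mpr hsk', sub_nonneg.mpr hs1']
      · have hks : (k : ℝ) = s := le_antisymm (hkn'.trans hsn) hsk'
        rw [hks]
        simp
        apply div_nonneg (by nlinarith) (by linarith)
    linarith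
  · have h1k : 1 ∈ Finset.Icc 1 k := Finset.mem_Icc.mpr ⟨le_refl 1, hk⟩
    have := Finset.le_sup' (fun s : ℕ => 1 + ∑ s' ∈ Finset.Icc (s + 1) k,
      ((k : ℝ) - s' + 1) / ((n : ℝ) - s)) h1k
    rw [sum_closed n 1 k hk] at this
    simp only [Nat.cast_one] at this
    calc 1 + (k : ℝ) * ((k : ℝ) - 1) / (2 * ((n : ℝ) - 1))
        = 1 + ((k : ℝ) - 1) * ((k : ℝ) - 1 + 1) / (2 * ((n : ℝ) - 1)) := by ring
      _ ≤ _ := this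
end

section
/- (Integrated tail bound to MSE) Let E be a nonnegative random variable with E <= 2B almost surely for some B >= 1, and suppose that for all eps > F2 one has P(E >= eps) <= F1/(eps - F2)^2 + F3, where F1 > 0, 0 <= F2 < 2B, and F3 >= 0, with (F1 + F2)^2 <= 4B^2. Then E[E^2] <= (F1 + F2)^2 + 2*F1*F2*(1/F1 - 1/(2B - F2)) + 2*F1*ln((2B - F2)/F1) + 4*B^2*F3. -/
open MeasureTheory Set

/-- Integrated tail bound to MSE: if `E` is a nonnegative random variable with `E ≤ 2B`
almost surely (`B ≥ 1`), and `P(E ≥ ε) ≤ F₁/(ε - F₂)² + F₃` for all `ε > F₂`, where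
`F₁ > 0`, `0 ≤ F₂ < 2B`, `F₃ ≥ 0` and `(F₁ + F₂)² ≤ 4B²`, then
`E[E²] ≤ (F₁+F₂)² + 2F₁F₂(1/F₁ - 1/(2B - F₂)) + 2F₁ ln((2B - F₂)/F₁) + 4B²F₃`. -/
theorem integrated_tail_bound_mse
    {Ω : Type*} [MeasurableSpace Ω] (μ : Measure Ω) [IsProbabilityMeasure μ]
    (E : Ω → ℝ) (hmeas : Measurable E) (B F₁ F₂ F₃ : ℝ)
    (hB : 1 ≤ B) (h0 : ∀ᵐ ω ∂μ, 0 ≤ E ω) (hbd : ∀ᵐ ω ∂μ, E ω ≤ 2 * B)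
    (hF₁ : 0 < F₁) (hF₂ : 0 ≤ F₂) (hF₂' : F₂ < 2 * B) (hF₃ : 0 ≤ F₃)
    (hstar : (F₁ + F₂) ^ 2 ≤ 4 * B ^ 2)
    (htail : ∀ ε : ℝ, F₂ < ε →
      μ {ω | ε ≤ E ω} ≤ ENNReal.ofReal (F₁ / (ε - F₂) ^ 2 + F₃)) :
    ∫ ω, (E ω) ^ 2 ∂μ ≤
      (F₁ + F₂) ^ 2 + 2 * F₁ * F₂ * (1 / F₁ - 1 / (2 * B - F₂))
        + 2 * F₁ * Real.log ((2 * B - F₂) / F₁) + 4 * B ^ 2 * F₃ := by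
  set t₀ : ℝ := (F₁ + F₂) ^ 2 with ht₀
  have hB0 : (0:ℝ) < B := lt_of_lt_of_le one_pos hB
  have ht₀pos : 0 < t₀ := by positivity
  have hF12 : 0 < F₁ + F₂ := by linarith
  -- the tail function
  set f : ℝ → ℝ := fun t => (μ {a | t ≤ (E a) ^ 2}).toReal with hf
  have hanti : Antitone f := fun s t hst =>
    ENNReal.toReal_mono (measure_ne_top μ _)
      (measure_mono fun a ha => le_trans hst ha)
  have hfmeas : Measurable f := hanti.measurable
  have hf1 : ∀ t, f t ≤ 1 := fun t => by
    simpa using ENNReal.toReal_mono (by simp) (prob_le_one (μ := μ))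
  have hfnn : ∀ t, 0 ≤ f t := fun t => ENNReal.toReal_nonneg
  -- integrability of E²
  have hint : Integrable (fun ω => (E ω) ^ 2) μ := by
    refine Integrable.mono' (integrable_const (4 * B ^ 2)) ((hmeas.pow_const 2).aestronglyMeasurable) ?_
    filter_upwards [h0, hbd] with ω h1 h2
    rw [Real.norm_eq_abs, abs_of_nonneg (by positivity)]
    nlinarith
  -- layer cake
  have hlc : ∫ ω, (E ω) ^ 2 ∂μ = ∫ t in Ioc 0 (4 * B ^ 2), f t := by
    refine hint.integral_eq_integral_Ioc_meas_le ?_ ?_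
    · filter_upwards with ω using by positivity
    · filter_upwards [h0, hbd] with ω h1 h2 using by nlinarith
  -- pointwise tail bound
  have hbound : ∀ t ∈ Ioc t₀ (4 * B ^ 2), f t ≤ F₁ / (Real.sqrt t - F₂) ^ 2 + F₃ := by
    intro t ht
    have ht0 : 0 < t := lt_trans ht₀pos ht.1
    have hsq : F₁ + F₂ < Real.sqrt t := by
      have := Real.sqrt_lt_sqrt (le_of_lt ht₀pos) ht.1
      rwa [ht₀, Real.sqrt_sq hF12.le] at this
    have hεF₂ : F₂ < Real.sqrt t := by linarith
    have hsub : μ {a | t ≤ (E a) ^ 2} ≤ μ {a | Real.sqrt t ≤ E a} := by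
      refine measure_mono_ae ?_
      filter_upwards [h0] with a ha hmem
      have : Real.sqrt t ≤ Real.sqrt ((E a) ^ 2) := Real.sqrt_le_sqrt hmem
      rwa [Real.sqrt_sq ha] at this
    have := le_trans hsub (htail _ hεF₂)
    exact ENNReal.toReal_le_of_le_ofReal (by positivity) this
  -- integrability of f on intervals
  have hfint : ∀ a b : ℝ, IntegrableOn f (Ioc a b) := by
    intro a b
    refine Integrable.mono' (g := fun _ => (1:ℝ)) (integrableOn_const measure_Ioc_lt_top.ne)
      hfmeas.aestronglyMeasurable ?_
    filter_upwards with t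
    rw [Real.norm_eq_abs, abs_of_nonneg (hfnn t)]
    exact hf1 t
  -- the explicit bound function
  set g : ℝ → ℝ := fun t => F₁ / (Real.sqrt t - F₂) ^ 2 + F₃ with hg
  have hgcont : ContinuousOn g (Icc t₀ (4 * B ^ 2)) := by
    refine ContinuousOn.add (ContinuousOn.div continuousOn_const ?_ ?_) continuousOn_const
    · exact ((Real.continuous_sqrt.continuousOn.sub continuousOn_const).pow 2)
    · intro t ht
      have : F₁ + F₂ ≤ Real.sqrt t := by
        have := Real.sqrt_le_sqrt ht.1
        rwa [ht₀, Real.sqrt_sq hF12.le] at this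
      exact pow_ne_zero 2 (by linarith)
  have hgint : IntegrableOn g (Ioc t₀ (4 * B ^ 2)) :=
    (hgcont.integrableOn_Icc).mono_set Ioc_subset_Icc_self
  -- split the integral
  have hsplit : ∫ t in Ioc 0 (4 * B ^ 2), f t
      = (∫ t in Ioc 0 t₀, f t) + ∫ t in Ioc t₀ (4 * B ^ 2), f t := by
    rw [← setIntegral_union (Ioc_disjoint_Ioc_of_le le_rfl) measurableSet_Ioc (hfint 0 t₀)
      (hfint t₀ _), Ioc_union_Ioc_eq_Ioc ht₀pos.le hstar]
  -- first piece ≤ t₀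
  have hpiece1 : ∫ t in Ioc 0 t₀, f t ≤ t₀ := by
    calc ∫ t in Ioc 0 t₀, f t ≤ ∫ t in Ioc 0 t₀, (1:ℝ) :=
          integral_mono_of_nonneg (Filter.Eventually.of_forall hfnn)
            (integrableOn_const measure_Ioc_lt_top.ne)
            (Filter.Eventually.of_forall hf1)
      _ = t₀ := by simp [Real.volume_Ioc, ht₀pos.le]
  -- second piece ≤ ∫ g
  have hpiece2 : ∫ t in Ioc t₀ (4 * B ^ 2), f t ≤ ∫ t in Ioc t₀ (4 * B ^ 2), g t := by
    refine setIntegral_mono_on (hfint _ _) hgint measurableSet_Ioc ?_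
    exact hbound
  -- FTC computation of ∫ g
  have hgval : ∫ t in Ioc t₀ (4 * B ^ 2), g t
      = 2 * F₁ * F₂ * (1 / F₁ - 1 / (2 * B - F₂))
        + 2 * F₁ * Real.log ((2 * B - F₂) / F₁) + (4 * B ^ 2 - t₀) * F₃ := by
    have h2B : Real.sqrt (4 * B ^ 2) = 2 * B := by
      rw [show (4:ℝ) * B ^ 2 = (2 * B) ^ 2 by ring, Real.sqrt_sq (by linarith)]
    have hsq0 : Real.sqrt t₀ = F₁ + F₂ := by rw [ht₀, Real.sqrt_sq hF12.le]
    set G : ℝ → ℝ := fun t =>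
      2 * F₁ * Real.log (Real.sqrt t - F₂) - 2 * F₁ * F₂ * (Real.sqrt t - F₂)⁻¹ with hG
    have hkey : ∀ t ∈ Icc t₀ (4 * B ^ 2), F₁ ≤ Real.sqrt t - F₂ := by
      intro t ht
      have := Real.sqrt_le_sqrt ht.1
      rw [hsq0] at this
      linarith
    have hderiv : ∀ t ∈ Icc t₀ (4 * B ^ 2),
        HasDerivAt G (F₁ / (Real.sqrt t - F₂) ^ 2) t := by
      intro t ht
      have ht0 : 0 < t := lt_of_lt_of_le ht₀pos ht.1
      have hs0 : 0 < Real.sqrt t := Real.sqrt_pos.2 ht0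
      have hd : 0 < Real.sqrt t - F₂ := lt_of_lt_of_le hF₁ (hkey t ht)
      have h1 : HasDerivAt (fun u => Real.sqrt u - F₂) (1 / (2 * Real.sqrt t)) t :=
        (Real.hasDerivAt_sqrt (ne_of_gt ht0)).sub_const F₂
      have hlog : HasDerivAt (fun u => Real.log (Real.sqrt u - F₂))
          ((1 / (2 * Real.sqrt t)) / (Real.sqrt t - F₂)) t := h1.log (ne_of_gt hd)
      have hinv : HasDerivAt (fun u => (Real.sqrt u - F₂)⁻¹)
          (-(1 / (2 * Real.sqrt t)) / (Real.sqrt t - F₂) ^ 2) t := h1.inv (ne_of_gt hd)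
      have := ((hlog.const_mul (2 * F₁)).sub (hinv.const_mul (2 * F₁ * F₂)))
      refine this.congr_deriv ?_
      field_simp
      ring
    have hcont1 : ContinuousOn (fun t => F₁ / (Real.sqrt t - F₂) ^ 2)
        (Icc t₀ (4 * B ^ 2)) := by
      refine ContinuousOn.div continuousOn_const
        ((Real.continuous_sqrt.continuousOn.sub continuousOn_const).pow 2) ?_
      intro t ht
      exact pow_ne_zero 2 (by have := hkey t ht; linarith)
    have hii : IntervalIntegrable (fun t => F₁ / (Real.sqrt t - F₂) ^ 2) volume
        t₀ (4 * B ^ 2) := hcont1.intervalIntegrable_of_Icc hstar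
    have hFTC := intervalIntegral.integral_eq_sub_of_hasDerivAt
      (f := G) (fun t ht => hderiv t (by rwa [uIcc_of_le hstar] at ht)) hii
    have hval : G (4 * B ^ 2) - G t₀
        = 2 * F₁ * F₂ * (1 / F₁ - 1 / (2 * B - F₂))
          + 2 * F₁ * Real.log ((2 * B - F₂) / F₁) := by
      simp only [hG, h2B, hsq0]
      rw [show F₁ + F₂ - F₂ = F₁ by ring,
        Real.log_div (by linarith) (ne_of_gt hF₁)]
      field_simp
      ring
    calc ∫ t in Ioc t₀ (4 * B ^ 2), g t
        = ∫ t in t₀..(4 * B ^ 2), g t := (intervalIntegral.integral_of_le hstar).symm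
      _ = (∫ t in t₀..(4 * B ^ 2), F₁ / (Real.sqrt t - F₂) ^ 2)
          + ∫ t in t₀..(4 * B ^ 2), F₃ :=
        intervalIntegral.integral_add hii intervalIntegrable_const
      _ = (G (4 * B ^ 2) - G t₀) + (4 * B ^ 2 - t₀) * F₃ := by
        rw [hFTC, intervalIntegral.integral_const, smul_eq_mul]
      _ = _ := by rw [hval]
  calc ∫ ω, (E ω) ^ 2 ∂μ
      = (∫ t in Ioc 0 t₀, f t) + ∫ t in Ioc t₀ (4 * B ^ 2), f t := by rw [hlc, hsplit]
    _ ≤ t₀ + ∫ t in Ioc t₀ (4 * B ^ 2), g t := add_le_add hpiece1 hpiece2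
    _ = t₀ + (2 * F₁ * F₂ * (1 / F₁ - 1 / (2 * B - F₂))
        + 2 * F₁ * Real.log ((2 * B - F₂) / F₁) + (4 * B ^ 2 - t₀) * F₃) := by rw [hgval]
    _ ≤ _ := by nlinarith [mul_nonneg ht₀pos.le hF₃]
end
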